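/- Uniform stability of the continuous problem: if u = (u_1,…,u_M) : [0,1] × [0,T] → ℝ^M is continuous, has continuous ∂u_k/∂t and ∂²u_k/∂x² on (0,1) × (0,T], and solves L_ε u = f in (0,1) × (0,T] with u(0,t) = u(1,t) = 0 for t ∈ [0,T] and u(x,0) = 0 for x ∈ [0,1], where f is continuous and bounded, then max_{k} sup_{(x,t) ∈ [0,1]×[0,T]} |u_k(x,t)| ≤ (1/β*) · max_{k} sup_{(x,t) ∈ [0,1]×[0,T]} |f_k(x,t)|. -/
import Mathlib

open Set Filter Topology

/-- Uniform stability of the continuous problem: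
`‖u‖_∞ ≤ (1/β*) ‖f‖_∞` for solutions of `L_ε u = f` with homogeneous data.
The maximum norms are expressed through an arbitrary componentwise bound `Cf` on `f`. -/
theorem stmt_1
    (M : ℕ) (hM : 2 ≤ M) (T : ℝ) (hT : 0 < T)
    (ε : ℝ) (hε : ε ∈ Set.Ioc (0:ℝ) 1)
    (βs : ℝ) (hβs : 0 < βs)
    (a : Fin M → Fin M → ℝ → ℝ)
    (ha_cont : ∀ k m, ContinuousOn (a k m) (Set.Icc 0 1))
    (ha_off : ∀ k m, k ≠ m → ∀ x ∈ Set.Icc (0:ℝ) 1, a k m x ≤ 0)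
    (ha_diag : ∀ k, ∀ x ∈ Set.Icc (0:ℝ) 1, 0 < a k k x)
    (ha_sum : ∀ k, ∀ x ∈ Set.Icc (0:ℝ) 1, βs ≤ ∑ m, a k m x)
    (u ux uxx ut : ℝ → ℝ → Fin M → ℝ) (f : ℝ → ℝ → Fin M → ℝ)
    (hu_cont : ∀ k, ContinuousOn (fun p : ℝ × ℝ => u p.1 p.2 k)
      (Set.Icc 0 1 ×ˢ Set.Icc 0 T))
    (hut : ∀ k, ∀ x ∈ Set.Ioo (0:ℝ) 1, ∀ t ∈ Set.Ioc (0:ℝ) T,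
      HasDerivAt (fun s => u x s k) (ut x t k) t)
    (hut_cont : ∀ k, ContinuousOn (fun p : ℝ × ℝ => ut p.1 p.2 k)
      (Set.Ioo 0 1 ×ˢ Set.Ioc 0 T))
    (hux : ∀ k, ∀ x ∈ Set.Ioo (0:ℝ) 1, ∀ t ∈ Set.Ioc (0:ℝ) T,
      HasDerivAt (fun w => u w t k) (ux x t k) x)
    (huxx : ∀ k, ∀ x ∈ Set.Ioo (0:ℝ) 1, ∀ t ∈ Set.Ioc (0:ℝ) T,
      HasDerivAt (fun w => ux w t k) (uxx x t k) x)
    (huxx_cont : ∀ k, ContinuousOn (fun p : ℝ × ℝ => uxx p.1 p.2 k)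
      (Set.Ioo 0 1 ×ˢ Set.Ioc 0 T))
    (hf_cont : ∀ k, ContinuousOn (fun p : ℝ × ℝ => f p.1 p.2 k)
      (Set.Icc 0 1 ×ˢ Set.Icc 0 T))
    (hf_bdd : ∃ B : ℝ, ∀ x ∈ Set.Icc (0:ℝ) 1, ∀ t ∈ Set.Icc (0:ℝ) T, ∀ k,
      |f x t k| ≤ B)
    (h_eq : ∀ x ∈ Set.Ioo (0:ℝ) 1, ∀ t ∈ Set.Ioc (0:ℝ) T, ∀ k,
      ut x t k - ε * uxx x t k + ∑ m, a k m x * u x t m = f x t k)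
    (h_bc0 : ∀ t ∈ Set.Icc (0:ℝ) T, ∀ k, u 0 t k = 0)
    (h_bc1 : ∀ t ∈ Set.Icc (0:ℝ) T, ∀ k, u 1 t k = 0)
    (h_init : ∀ x ∈ Set.Icc (0:ℝ) 1, ∀ k, u x 0 k = 0) :
    ∀ Cf : ℝ,
      (∀ x ∈ Set.Icc (0:ℝ) 1, ∀ t ∈ Set.Icc (0:ℝ) T, ∀ k, |f x t k| ≤ Cf) →
      ∀ x ∈ Set.Icc (0:ℝ) 1, ∀ t ∈ Set.Icc (0:ℝ) T, ∀ k,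
        |u x t k| ≤ (1/βs) * Cf := by
  intro Cf hCf x hx t ht k
  by_contra hcon
  push_neg at hcon
  haveI : Nonempty (Fin M) := ⟨⟨0, by omega⟩⟩
  have hne : (Finset.univ : Finset (Fin M)).Nonempty := Finset.univ_nonempty
  set K : Set (ℝ × ℝ) := Set.Icc 0 1 ×ˢ Set.Icc 0 T with hK
  have hKcomp : IsCompact K := (isCompact_Icc).prod isCompact_Icc
  have hKne : K.Nonempty := ⟨(x, t), ⟨hx, ht⟩⟩
  set g : ℝ × ℝ → ℝ := fun q => Finset.univ.sup' hne (fun m => |u q.1 q.2 m|) with hg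
  have hg_cont : ContinuousOn g K :=
    ContinuousOn.finset_sup'_apply hne (fun m _ => (hu_cont m).abs)
  obtain ⟨p, hpK, hpmax'⟩ := hKcomp.exists_isMaxOn hKne hg_cont
  have hpmax : ∀ y ∈ K, g y ≤ g p := hpmax'
  obtain ⟨k0, -, hk0⟩ := Finset.exists_mem_eq_sup' hne (fun m => |u p.1 p.2 m|)
  set S : ℝ := g p with hS
  have hSk0 : S = |u p.1 p.2 k0| := hk0
  have hub : ∀ y ∈ K, ∀ m, |u y.1 y.2 m| ≤ S := fun y hy m =>
    (Finset.le_sup' (fun m => |u y.1 y.2 m|) (Finset.mem_univ m)).trans (hpmax y hy)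
  have hCf0 : 0 ≤ Cf := (abs_nonneg _).trans (hCf x hx t ht k)
  have hCS : (1/βs) * Cf < S :=
    lt_of_lt_of_le hcon (hub (x, t) ⟨hx, ht⟩ k)
  have hSpos : 0 < S :=
    lt_of_le_of_lt (by positivity) hCS
  have hx0Icc : p.1 ∈ Set.Icc (0:ℝ) 1 := hpK.1
  have ht0Icc : p.2 ∈ Set.Icc (0:ℝ) T := hpK.2
  -- sign normalization
  set σ : ℝ := if 0 ≤ u p.1 p.2 k0 then 1 else -1 with hσ
  have hσabs : |σ| = 1 := by
    rw [hσ]; split_ifs <;> simp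
  have hσu : σ * u p.1 p.2 k0 = S := by
    rw [hSk0, hσ]; split_ifs with h
    · rw [abs_of_nonneg h]; ring
    · rw [abs_of_neg (lt_of_not_ge h)]; ring
  have hvle : ∀ y ∈ K, ∀ m, σ * u y.1 y.2 m ≤ S := by
    intro y hy m
    calc σ * u y.1 y.2 m ≤ |σ * u y.1 y.2 m| := le_abs_self _
      _ = |u y.1 y.2 m| := by rw [abs_mul, hσabs, one_mul]
      _ ≤ S := hub y hy m
  -- the max point is interior in x and positive in t
  have hx0in : p.1 ∈ Set.Ioo (0:ℝ) 1 := by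
    refine ⟨lt_of_le_of_ne hx0Icc.1 ?_, lt_of_le_of_ne hx0Icc.2 ?_⟩
    · intro h0
      rw [hSk0, ← h0, h_bc0 p.2 ht0Icc k0, abs_zero] at hSpos
      exact lt_irrefl 0 hSpos
    · intro h1
      rw [hSk0, h1, h_bc1 p.2 ht0Icc k0, abs_zero] at hSpos
      exact lt_irrefl 0 hSpos
  have ht0in : p.2 ∈ Set.Ioc (0:ℝ) T := by
    refine ⟨lt_of_le_of_ne ht0Icc.1 ?_, ht0Icc.2⟩
    intro h0
    rw [hSk0, ← h0, h_init p.1 hx0Icc k0, abs_zero] at hSpos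
    exact lt_irrefl 0 hSpos
  -- time derivative at the max point is nonnegative
  have hdt : HasDerivAt (fun s => σ * u p.1 s k0) (σ * ut p.1 p.2 k0) p.2 :=
    (hut k0 p.1 hx0in p.2 ht0in).const_mul σ
  have hvt : 0 ≤ σ * ut p.1 p.2 k0 := by
    have hslope : Tendsto (slope (fun s => σ * u p.1 s k0) p.2) (𝓝[<] p.2)
        (𝓝 (σ * ut p.1 p.2 k0)) :=
      (hasDerivWithinAt_iff_tendsto_slope' (notMem_Iio.2 le_rfl)).1
        (hdt.hasDerivWithinAt (s := Set.Iio p.2))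
    refine ge_of_tendsto hslope ?_
    filter_upwards [Ioo_mem_nhdsLT ht0in.1] with s hs
    have hsK : (p.1, s) ∈ K := ⟨hx0Icc, ⟨le_of_lt hs.1, hs.2.le.trans ht0in.2⟩⟩
    have h1 : σ * u p.1 s k0 - σ * u p.1 p.2 k0 ≤ 0 := by
      have := hvle (p.1, s) hsK k0
      rw [hσu]; simpa using sub_nonpos.2 this
    have h2 : s - p.2 < 0 := sub_neg.2 hs.2
    rw [slope_def_field]
    exact div_nonneg_iff.2 (Or.inr ⟨h1, h2.le⟩)
  -- first space derivative vanishes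
  have hdx : HasDerivAt (fun w => σ * u w p.2 k0) (σ * ux p.1 p.2 k0) p.1 :=
    (hux k0 p.1 hx0in p.2 ht0in).const_mul σ
  have hmaxloc : IsLocalMax (fun w => σ * u w p.2 k0) p.1 := by
    filter_upwards [Ioo_mem_nhds hx0in.1 hx0in.2] with w hw
    have : σ * u w p.2 k0 ≤ S :=
      hvle (w, p.2) ⟨⟨hw.1.le, hw.2.le⟩, ht0Icc⟩ k0
    simpa [hσu] using this
  have hvx0 : σ * ux p.1 p.2 k0 = 0 := hmaxloc.hasDerivAt_eq_zero hdx
  -- second space derivative is nonpositive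
  have hvxx : σ * uxx p.1 p.2 k0 ≤ 0 := by
    by_contra hpos
    push_neg at hpos
    set vxf : ℝ → ℝ := fun w => σ * ux w p.2 k0 with hvxf
    have hdxx : HasDerivAt vxf (σ * uxx p.1 p.2 k0) p.1 :=
      (huxx k0 p.1 hx0in p.2 ht0in).const_mul σ
    have hslope : Tendsto (slope vxf p.1) (𝓝[≠] p.1) (𝓝 (σ * uxx p.1 p.2 k0)) :=
      hasDerivAt_iff_tendsto_slope.1 hdxx
    have hev : ∀ᶠ w in 𝓝[>] p.1, 0 < slope vxf p.1 w ∧ w ∈ Set.Ioo p.1 1 := by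
      have h1 : ∀ᶠ w in 𝓝[≠] p.1, 0 < slope vxf p.1 w :=
        hslope.eventually (eventually_gt_nhds hpos)
      have h2 : ∀ᶠ w in 𝓝[>] p.1, 0 < slope vxf p.1 w :=
        h1.filter_mono (nhdsWithin_mono _ (fun w hw => ne_of_gt hw))
      filter_upwards [h2, Ioo_mem_nhdsGT hx0in.2] with w hw1 hw2
      exact ⟨hw1, hw2⟩
    obtain ⟨b', hb', hsub⟩ := mem_nhdsGT_iff_exists_Ioo_subset.1 hev
    set w0 : ℝ := (p.1 + b') / 2 with hw0def
    have hb'gt : p.1 < b' := hb'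
    have hw0mem : w0 ∈ Set.Ioo p.1 b' := ⟨by rw [hw0def]; linarith, by rw [hw0def]; linarith⟩
    have hw0 := hsub hw0mem
    have hw0lt1 : w0 < 1 := hw0.2.2
    -- MVT on [p.1, w0]
    have hψc : ContinuousOn (fun w => σ * u w p.2 k0) (Set.Icc p.1 w0) := by
      have h1 : ContinuousOn (fun w : ℝ => ((w, p.2) : ℝ × ℝ)) (Set.Icc p.1 w0) :=
        (continuous_id.prodMk continuous_const).continuousOn
      have hmap : Set.MapsTo (fun w : ℝ => ((w, p.2) : ℝ × ℝ)) (Set.Icc p.1 w0) K :=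
        fun w hw => ⟨⟨le_trans hx0in.1.le hw.1, le_trans hw.2 hw0lt1.le⟩, ht0Icc⟩
      exact continuousOn_const.mul ((hu_cont k0).comp h1 hmap)
    have hψd : ∀ w ∈ Set.Ioo p.1 w0,
        HasDerivAt (fun w => σ * u w p.2 k0) (vxf w) w := by
      intro w hw
      have hw01 : w ∈ Set.Ioo (0:ℝ) 1 :=
        ⟨lt_trans hx0in.1 hw.1, lt_trans hw.2 hw0lt1⟩
      exact (hux k0 w hw01 p.2 ht0in).const_mul σ
    obtain ⟨c, hc, hceq⟩ := exists_hasDerivAt_eq_slope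
      (fun w => σ * u w p.2 k0) vxf hw0mem.1 hψc hψd
    have hcF : c ∈ Set.Ioo p.1 b' := ⟨hc.1, lt_trans hc.2 hw0mem.2⟩
    have hcslope : 0 < slope vxf p.1 c := (hsub hcF).1
    rw [slope_def_field, hvxf] at hcslope
    have hcpos : 0 < vxf c := by
      have hden : 0 < c - p.1 := sub_pos.2 hc.1
      have := mul_pos hcslope hden
      rw [div_mul_cancel₀ _ (ne_of_gt hden)] at this
      simp only [hvxf] at this ⊢
      rw [hvx0] at this; linarith
    have hgt : σ * u w0 p.2 k0 > σ * u p.1 p.2 k0 := by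
      have hden : 0 < w0 - p.1 := sub_pos.2 hw0mem.1
      have := mul_pos hcpos hden
      rw [hceq, div_mul_cancel₀ _ (ne_of_gt hden)] at this
      linarith
    have hle : σ * u w0 p.2 k0 ≤ S :=
      hvle (w0, p.2) ⟨⟨le_trans hx0in.1.le hw0mem.1.le, hw0lt1.le⟩, ht0Icc⟩ k0
    rw [hσu] at hgt
    linarith
  -- plug into the equation at the max point
  have heq := h_eq p.1 hx0in p.2 ht0in k0
  have hsum_eq : σ * ∑ m, a k0 m p.1 * u p.1 p.2 m
      = ∑ m, a k0 m p.1 * (σ * u p.1 p.2 m) := by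
    rw [Finset.mul_sum]
    exact Finset.sum_congr rfl fun m _ => by ring
  have heq2 : σ * ut p.1 p.2 k0 - ε * (σ * uxx p.1 p.2 k0)
      + ∑ m, a k0 m p.1 * (σ * u p.1 p.2 m) = σ * f p.1 p.2 k0 := by
    linear_combination σ * heq - hsum_eq
  have hsum_ge : βs * S ≤ ∑ m, a k0 m p.1 * (σ * u p.1 p.2 m) := by
    have hterm : ∀ m ∈ Finset.univ, a k0 m p.1 * S ≤ a k0 m p.1 * (σ * u p.1 p.2 m) := by
      intro m _
      by_cases hm : k0 = m
      · subst hm; rw [hσu]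
      · exact mul_le_mul_of_nonpos_left (hvle p hpK m) (ha_off k0 m hm p.1 hx0Icc)
    calc βs * S ≤ (∑ m, a k0 m p.1) * S :=
          mul_le_mul_of_nonneg_right (ha_sum k0 p.1 hx0Icc) hSpos.le
      _ = ∑ m, a k0 m p.1 * S := by rw [Finset.sum_mul]
      _ ≤ _ := Finset.sum_le_sum hterm
  have hfle : σ * f p.1 p.2 k0 ≤ Cf := by
    calc σ * f p.1 p.2 k0 ≤ |σ * f p.1 p.2 k0| := le_abs_self _
      _ = |f p.1 p.2 k0| := by rw [abs_mul, hσabs, one_mul]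
      _ ≤ Cf := hCf p.1 hx0Icc p.2 ht0Icc k0
  have hCfS : Cf < βs * S := by
    have h1 : βs * ((1/βs) * Cf) < βs * S := mul_lt_mul_of_pos_left hCS hβs
    have h2 : βs * ((1/βs) * Cf) = Cf := by field_simp
    linarith
  have hεpos : 0 < ε := hε.1
  nlinarith [mul_nonpos_of_nonneg_of_nonpos hεpos.le hvxx]
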